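/- Let n, d, k be positive integers and α, β ∈ [0,1]. Suppose Iso: 𝔽₂^n → {0,1} is an (α, β, k−1)-isolator for the class of degree-d polynomial sources on 𝔽₂^n with at most 4(k+1) input variables. Then Iso is an (α, β + 2^{−k}, k)-isolator for the class of all degree-d polynomial sources on 𝔽₂^n (with any number of input variables). -/

import Mathlib

open Finset

/-- The uniform distribution on a finite type. -/
noncomputable def unif (α : Type*) [Fintype α] : α → ℝ := fun _ => (Fintype.card α : ℝ)⁻¹

/-- `p` is a probability distribution on the finite type `α`. -/
def IsDist {α : Type*} [Fintype α] (p : α → ℝ) : Prop :=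
  (∀ a, 0 ≤ p a) ∧ ∑ a, p a = 1

open scoped Classical in
/-- Probability that a sample from `p` lands in the event `E`. -/
noncomputable def prob {α : Type*} [Fintype α] (p : α → ℝ) (E : Set α) : ℝ :=
  ∑ a, if a ∈ E then p a else 0

/-- Total variation distance between two distributions on a finite type. -/
noncomputable def tv {α : Type*} [Fintype α] (p q : α → ℝ) : ℝ :=
  (∑ a, |p a - q a|) / 2

open scoped Classical in
/-- Pushforward of the distribution `p` under the map `f`. -/
noncomputable def push {α β : Type*} [Fintype α] (f : α → β) (p : α → ℝ) : β → ℝ :=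
  fun b => ∑ a, if f a = b then p a else 0

/-- `H∞(p) ≥ k`, i.e. every point has mass at most `2 ^ (-k)`. -/
def MinEntropyGE {α : Type*} (p : α → ℝ) (k : ℝ) : Prop :=
  ∀ a, p a ≤ (2 : ℝ) ^ (-k)

/-- `(a, b, k)`-isolator for the class `𝒳` of distributions on the finite type `α`:
`Iso` outputs `1` with probability at least `a` on the uniform distribution, and for every
`X ∈ 𝒳`, the probability that a sample of `X` is a light point (mass at most `2^(-k)`)
on which `Iso` outputs `1` is at most `b`. -/
def IsIsolator {α : Type*} [Fintype α] (𝒳 : Set (α → ℝ)) (Iso : α → Bool)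
    (a b k : ℝ) : Prop :=
  a ≤ prob (unif α) {x | Iso x = true} ∧
  ∀ X ∈ 𝒳, prob X {x | X x ≤ (2 : ℝ) ^ (-k) ∧ Iso x = true} ≤ b

/-- `(ε, k)`-extractor (outputting `m` bits) for the class `𝒳`. -/
def IsExtractor {α : Type*} [Fintype α] {m : ℕ} (𝒳 : Set (α → ℝ))
    (Ext : α → Fin m → Bool) (ε k : ℝ) : Prop :=
  ∀ X ∈ 𝒳, MinEntropyGE X k → tv (push Ext X) (unif (Fin m → Bool)) ≤ ε

/-- Identify `Bool` with `𝔽₂`. -/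
def b2f (b : Bool) : ZMod 2 := if b then 1 else 0

/-- Degree-`d` polynomial sources on `𝔽₂^n` with exactly `r` input variables:
pushforwards of the uniform distribution on `𝔽₂^r` under an `n`-tuple of
`𝔽₂`-polynomials of total degree at most `d`. -/
def polySourceExact (d r n : ℕ) : Set ((Fin n → Bool) → ℝ) :=
  {X | ∃ P : Fin n → MvPolynomial (Fin r) (ZMod 2),
    (∀ i, (P i).totalDegree ≤ d) ∧
    X = push (fun u i => decide (MvPolynomial.eval (fun j => b2f (u j)) (P i) = 1))
          (unif (Fin r → Bool))}

/-- Degree-`d` polynomial sources on `𝔽₂^n` with any (positive) number of input variables. -/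
def polySource (d n : ℕ) : Set ((Fin n → Bool) → ℝ) :=
  {X | ∃ r : ℕ, 0 < r ∧ X ∈ polySourceExact d r n}

/-- Degree-`d` polynomial sources on `𝔽₂^n` with at most `R` input variables. -/
def polySourceAtMostInputs (d R n : ℕ) : Set ((Fin n → Bool) → ℝ) :=
  {X | ∃ r : ℕ, 0 < r ∧ r ≤ R ∧ X ∈ polySourceExact d r n}

/-!
Restrict the source `X = P(U^r)` along a uniformly random affine map `A : 𝔽₂^t → 𝔽₂^r`,
`t = 4(k+1)`: each restriction `Y_A = P(A(U^t))` is again a degree-`d` source, now with `t` inputs.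
Affine maps form a pairwise independent family, so `Y_A(x)` is an empirical mean over `2^t`
pairwise independent samples: its mean over `A` is `X(x)` and its variance is at most
`2^(-t) X(x)`. At a point with `X(x) ≤ 2^(-k)` where `Iso` is `1`, either `Y_A(x) ≤ 2^(-(k-1))`,
and the hypothesis on `Iso` applied to `Y_A` pays for it, or `|Y_A(x) - X(x)| ≥ 2^(-k)`, and by
Chebyshev such points cost at most `2^(2k-t) ≤ 2^(-k)` in total.
-/

section Distributions

variable {α β : Type*} [Fintype α]

lemma sum_unif [Nonempty α] : ∑ a, unif α a = 1 := by
  simp [unif]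

lemma isDist_unif [Nonempty α] : IsDist (unif α) :=
  ⟨fun _ => by unfold unif; positivity, sum_unif⟩

lemma sum_push_mul [Fintype β] (φ : α → β) (p : α → ℝ) (g : β → ℝ) :
    ∑ b, push φ p b * g b = ∑ a, p a * g (φ a) := by
  simp only [push, Finset.sum_mul, ite_mul, zero_mul]
  rw [Finset.sum_comm]
  refine Finset.sum_congr rfl fun a _ => ?_
  rw [Finset.sum_eq_single (φ a) (fun b _ hb => if_neg (Ne.symm hb)) (by simp)]
  exact if_pos rfl

lemma IsDist.push [Fintype β] {p : α → ℝ} (hp : IsDist p) (φ : α → β) : IsDist (push φ p) := by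
  refine ⟨fun b => Finset.sum_nonneg fun a _ => ?_, ?_⟩
  · split_ifs
    exacts [hp.1 a, le_rfl]
  · simpa [hp.2] using sum_push_mul φ p 1

lemma IsDist.le_one {p : α → ℝ} (hp : IsDist p) (a : α) : p a ≤ 1 :=
  hp.2 ▸ Finset.single_le_sum (fun b _ => hp.1 b) (Finset.mem_univ a)

open scoped Classical in
lemma push_apply_eq_sum (φ : α → β) (p : α → ℝ) (x : β) :
    push φ p x = ∑ a, p a * if φ a = x then 1 else 0 := by
  simp only [push, mul_ite, mul_one, mul_zero]

lemma IsDist.sum_mul_sq_sub_le {p : α → ℝ} (hp : IsDist p) {g : α → ℝ}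
    (hg₀ : ∀ a, 0 ≤ g a) (hg₁ : ∀ a, g a ≤ 1) :
    ∑ a, p a * (g a - ∑ b, p b * g b) ^ 2 ≤ ∑ a, p a * g a := by
  set m := ∑ b, p b * g b
  calc ∑ a, p a * (g a - m) ^ 2 = ∑ a, p a * g a ^ 2 - m ^ 2 := by
        have : ∀ a, p a * (g a - m) ^ 2 = p a * g a ^ 2 - 2 * m * (p a * g a) + m ^ 2 * p a :=
          fun a => by ring
        simp only [this, Finset.sum_add_distrib, Finset.sum_sub_distrib, ← Finset.mul_sum, hp.2]
        ring
    _ ≤ ∑ a, p a * g a := by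
        have : ∑ a, p a * g a ^ 2 ≤ ∑ a, p a * g a := Finset.sum_le_sum fun a _ =>
          mul_le_mul_of_nonneg_left (by nlinarith [hg₀ a, hg₁ a]) (hp.1 a)
        nlinarith [sq_nonneg m]

lemma push_comp_equiv {β' : Type*} (φ : α → β) (e : β ≃ β') (p : α → ℝ) :
    push (fun a => e (φ a)) p = fun b => push φ p (e.symm b) := by
  funext b
  refine Finset.sum_congr rfl fun a _ => ?_
  by_cases ha : φ a = e.symm b
  · rw [if_pos ha, if_pos (e.eq_symm_apply.mp ha)]
  · rw [if_neg ha, if_neg (mt e.eq_symm_apply.mpr ha)]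

lemma unif_comp_equiv_symm [Fintype β] {β' : Type*} [Fintype β'] (e : β ≃ β') :
    (fun b => unif β (e.symm b)) = unif β' := by
  funext b
  simp [unif, Fintype.card_congr e]

end Distributions

lemma le_ite_add_sq_sub_div_sq {x y θ : ℝ} (hθ : 0 < θ) (hy : y ≤ 1) (hx : x ≤ θ) :
    y ≤ (if y ≤ 2 * θ then y else 0) + (y - x) ^ 2 / θ ^ 2 := by
  split_ifs with hy2θ
  · have : 0 ≤ (y - x) ^ 2 / θ ^ 2 := by positivity
    linarith
  · rw [zero_add, le_div_iff₀ (by positivity)]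
    nlinarith

theorem prob_light_le_of_sum_sq_sub_le {ι β : Type*} [Fintype ι] [Fintype β]
    {μ : ι → ℝ} (hμ : IsDist μ) {X : β → ℝ} {Y : ι → β → ℝ} (hY : ∀ A, IsDist (Y A))
    (hmean : ∀ x, ∑ A, μ A * Y A x = X x) {ε : ℝ}
    (hdev : ∀ x, ∑ A, μ A * (Y A x - X x) ^ 2 ≤ ε * X x)
    {θ : ℝ} (hθ : 0 < θ) (S : β → Prop) {b : ℝ}
    (hb : ∀ A, prob (Y A) {x | Y A x ≤ 2 * θ ∧ S x} ≤ b) :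
    prob X {x | X x ≤ θ ∧ S x} ≤ b + ε / θ ^ 2 := by
  set L := {x | X x ≤ θ ∧ S x}
  set D : ι → ℝ := fun A => prob (fun x => (Y A x - X x) ^ 2) L
  have hX : ∑ x, X x = 1 := by
    simp_rw [← hmean]
    rw [Finset.sum_comm]
    simp [← Finset.mul_sum, (hY _).2, hμ.2]
  have hY_light : ∀ A, prob (Y A) L ≤ b + D A / θ ^ 2 := by
    intro A
    calc prob (Y A) L ≤ prob (Y A) {x | Y A x ≤ 2 * θ ∧ S x} + D A / θ ^ 2 := by
          simp only [D, prob, Finset.sum_div, ← Finset.sum_add_distrib]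
          refine Finset.sum_le_sum fun x _ => ?_
          by_cases hx : x ∈ L
          · simpa [hx, hx.2] using le_ite_add_sq_sub_div_sq hθ ((hY A).le_one x) hx.1
          · simp only [hx, if_false, zero_div, add_zero]
            split_ifs
            exacts [(hY A).1 x, le_rfl]
      _ ≤ b + D A / θ ^ 2 := add_le_add_left (hb A) _
  have hD : ∑ A, μ A * D A ≤ ε := by
    calc ∑ A, μ A * D A = prob (fun x => ∑ A, μ A * (Y A x - X x) ^ 2) L := by
          simp only [D, prob, Finset.mul_sum, mul_ite, mul_zero]
          rw [Finset.sum_comm]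
          exact Finset.sum_congr rfl fun x _ => by split_ifs <;> simp
      _ ≤ ∑ x, ε * X x := by
          refine Finset.sum_le_sum fun x _ => ?_
          split_ifs
          · exact hdev x
          · exact (Finset.sum_nonneg fun A _ => mul_nonneg (hμ.1 A) (sq_nonneg _)).trans (hdev x)
      _ = ε := by rw [← Finset.mul_sum, hX, mul_one]
  calc prob X L = ∑ A, μ A * prob (Y A) L := by
        simp only [prob, ← hmean, Finset.mul_sum, mul_ite, mul_zero]
        rw [Finset.sum_comm]
        exact Finset.sum_congr rfl fun x _ => by split_ifs <;> simp
    _ ≤ ∑ A, μ A * (b + D A / θ ^ 2) :=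
        Finset.sum_le_sum fun A _ => mul_le_mul_of_nonneg_left (hY_light A) (hμ.1 A)
    _ = b + (∑ A, μ A * D A) / θ ^ 2 := by
        simp only [mul_add, Finset.sum_add_distrib, ← Finset.sum_mul, hμ.2, one_mul,
          mul_div_assoc', Finset.sum_div]
    _ ≤ b + ε / θ ^ 2 := by gcongr

section PairwiseIndependent

variable {ι γ δ : Type*} [Fintype ι] [Fintype δ]

/-- The one-point condition is not implied by the two-point one when `γ` is a singleton. -/
def IsPairwiseIndependentFamily (h : ι → γ → δ) : Prop :=
  (∀ u, push (fun A => h A u) (unif ι) = unif δ) ∧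
  ∀ u u', u ≠ u' → push (fun A => (h A u, h A u')) (unif ι) = unif (δ × δ)

namespace IsPairwiseIndependentFamily

variable {h : ι → γ → δ}

lemma sum_unif_mul_apply (hh : IsPairwiseIndependentFamily h) (u : γ) (g : δ → ℝ) :
    ∑ A, unif ι A * g (h A u) = ∑ w, unif δ w * g w := by
  rw [← sum_push_mul (fun A => h A u) (unif ι) g, hh.1 u]

lemma sum_unif_mul_apply_mul_apply (hh : IsPairwiseIndependentFamily h) {u u' : γ}
    (huu' : u ≠ u') (g g' : δ → ℝ) :
    ∑ A, unif ι A * (g (h A u) * g' (h A u')) =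
      (∑ w, unif δ w * g w) * ∑ w, unif δ w * g' w := by
  rw [← sum_push_mul (fun A => (h A u, h A u')) (unif ι) (fun p => g p.1 * g' p.2),
    hh.2 u u' huu', Fintype.sum_prod_type, Finset.sum_mul_sum]
  refine Finset.sum_congr rfl fun w _ => Finset.sum_congr rfl fun w' _ => ?_
  simp only [unif, Fintype.card_prod, Nat.cast_mul, mul_inv]
  ring

theorem comp_equiv {γ' δ' : Type*} [Fintype δ'] (hh : IsPairwiseIndependentFamily h)
    (e : γ' ≃ γ) (e' : δ ≃ δ') : IsPairwiseIndependentFamily fun A u => e' (h A (e u)) := by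
  constructor
  · intro u
    rw [push_comp_equiv (fun A => h A (e u)) e', hh.1, unif_comp_equiv_symm]
  · intro u u' huu'
    have := push_comp_equiv (fun A => (h A (e u), h A (e u'))) (e'.prodCongr e') (unif ι)
    rw [hh.2 _ _ (e.injective.ne huu'), unif_comp_equiv_symm] at this
    exact this

variable [Fintype γ] [Nonempty γ]

lemma sum_unif_mul_sum_unif_mul (hh : IsPairwiseIndependentFamily h) (g : δ → ℝ) :
    ∑ A, unif ι A * ∑ u, unif γ u * g (h A u) = ∑ w, unif δ w * g w := by
  simp only [Finset.mul_sum]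
  rw [Finset.sum_comm]
  simp only [mul_left_comm (unif ι _), ← Finset.mul_sum, hh.sum_unif_mul_apply, ← Finset.sum_mul,
    sum_unif, one_mul]

theorem sum_unif_mul_sq_sum_unif_mul_sub [Nonempty δ] (hh : IsPairwiseIndependentFamily h)
    (g : δ → ℝ) :
    ∑ A, unif ι A * (∑ u, unif γ u * g (h A u) - ∑ w, unif δ w * g w) ^ 2 =
      (Fintype.card γ : ℝ)⁻¹ * ∑ w, unif δ w * (g w - ∑ w, unif δ w * g w) ^ 2 := by
  classical
  set m := ∑ w, unif δ w * g w
  set V := ∑ w, unif δ w * (g w - m) ^ 2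
  have hm : ∑ w, unif δ w * (g w - m) = 0 := by
    simp only [mul_sub, Finset.sum_sub_distrib, ← Finset.sum_mul, sum_unif, one_mul]
    exact sub_self m
  have hcentered : ∀ A, ∑ u, unif γ u * g (h A u) - m = ∑ u, unif γ u * (g (h A u) - m) := by
    intro A
    simp only [mul_sub, Finset.sum_sub_distrib, ← Finset.sum_mul, sum_unif, one_mul]
  have hcov : ∀ u u', ∑ A, unif ι A * ((g (h A u) - m) * (g (h A u') - m)) =
      if u = u' then V else 0 := by
    intro u u'
    split_ifs with huu'
    · subst huu'
      simp only [← sq]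
      exact hh.sum_unif_mul_apply u fun w => (g w - m) ^ 2
    · rw [hh.sum_unif_mul_apply_mul_apply huu' (fun w => g w - m) (fun w => g w - m), hm,
        zero_mul]
  calc ∑ A, unif ι A * (∑ u, unif γ u * g (h A u) - m) ^ 2
      = ∑ u, ∑ u', unif γ u * unif γ u' *
          ∑ A, unif ι A * ((g (h A u) - m) * (g (h A u') - m)) := by
        simp only [hcentered, sq, Finset.sum_mul_sum]
        simp only [Finset.mul_sum]
        rw [Finset.sum_comm]
        refine Finset.sum_congr rfl fun u _ => ?_
        rw [Finset.sum_comm]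
        refine Finset.sum_congr rfl fun u' _ => Finset.sum_congr rfl fun A _ => ?_
        ring
    _ = (Fintype.card γ : ℝ)⁻¹ * V := by
        simp only [hcov, mul_ite, mul_zero, Finset.sum_ite_eq, Finset.mem_univ, if_true]
        simp [unif]
        field_simp

open scoped Classical in
theorem sum_unif_mul_push_comp {β : Type*} (hh : IsPairwiseIndependentFamily h) (F : δ → β)
    (x : β) :
    ∑ A, unif ι A * push (fun u => F (h A u)) (unif γ) x = push F (unif δ) x := by
  simp only [push_apply_eq_sum]
  exact hh.sum_unif_mul_sum_unif_mul fun w => if F w = x then 1 else 0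

open scoped Classical in
theorem sum_unif_mul_sq_push_comp_sub_le {β : Type*} [Nonempty δ]
    (hh : IsPairwiseIndependentFamily h) (F : δ → β) (x : β) :
    ∑ A, unif ι A * (push (fun u => F (h A u)) (unif γ) x - push F (unif δ) x) ^ 2 ≤
      (Fintype.card γ : ℝ)⁻¹ * push F (unif δ) x := by
  simp only [push_apply_eq_sum]
  rw [hh.sum_unif_mul_sq_sum_unif_mul_sub fun w => if F w = x then 1 else 0]
  refine mul_le_mul_of_nonneg_left (isDist_unif.sum_mul_sq_sub_le (fun w => ?_) (fun w => ?_))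
    (by positivity) <;> split_ifs <;> norm_num

end IsPairwiseIndependentFamily

end PairwiseIndependent

lemma push_unif_eq_unif_of_surjective {G H : Type*} [AddGroup G] [AddGroup H] [Fintype G]
    [Fintype H] (φ : G →+ H) (hφ : Function.Surjective φ) : push φ (unif G) = unif H := by
  classical
  have hfiber : ∀ y, push φ (unif G) y = #{g | φ g = 0} * (Fintype.card G : ℝ)⁻¹ := by
    intro y
    rw [← AddMonoidHom.card_fiber_eq_of_mem_range φ (hφ y) (hφ 0)]
    simp [push, unif, Finset.sum_ite]
  have htotal := (isDist_unif.push φ).2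
  simp only [hfiber, Finset.sum_const, Finset.card_univ, nsmul_eq_mul] at htotal
  funext y
  rw [hfiber, unif, eq_inv_of_mul_eq_one_right htotal]

section Affine

open Matrix

def affineFamily (K m n : Type*) [NonUnitalNonAssocSemiring K] [Fintype n] :
    Matrix m n K × (m → K) → (n → K) → (m → K) :=
  fun A v => A.1 *ᵥ v + A.2

theorem isPairwiseIndependentFamily_affineFamily {K m n : Type*} [Field K] [Fintype K]
    [Fintype m] [Fintype n] [DecidableEq m] [DecidableEq n] :
    IsPairwiseIndependentFamily (affineFamily K m n) := by
  constructor
  · intro u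
    refine push_unif_eq_unif_of_surjective
      (AddMonoidHom.mk' (fun A => affineFamily K m n A u) fun A B => ?_) fun w => ⟨(0, w), ?_⟩
    · simp only [affineFamily, Prod.fst_add, Prod.snd_add, add_mulVec]
      abel
    · simp [affineFamily]
  · intro u u' huu'
    obtain ⟨i, hi⟩ : ∃ i, (u - u') i ≠ 0 := Function.ne_iff.mp (sub_ne_zero.mpr huu')
    refine push_unif_eq_unif_of_surjective (AddMonoidHom.mk'
      (fun A => (affineFamily K m n A u, affineFamily K m n A u')) fun A B => ?_) ?_
    · simp only [affineFamily, Prod.fst_add, Prod.snd_add, add_mulVec, Prod.mk_add_mk]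
      congr 1 <;> abel
    · rintro ⟨w, w'⟩
      set M := vecMulVec (w - w') (Pi.single i ((u - u') i)⁻¹)
      have hM : M *ᵥ (u - u') = w - w' := by
        rw [vecMulVec_mulVec, single_dotProduct, inv_mul_cancel₀ hi, MulOpposite.op_one, one_smul]
      refine ⟨(M, w' - M *ᵥ u'), ?_⟩
      simp only [AddMonoidHom.mk'_apply, affineFamily, Prod.mk.injEq]
      constructor
      · rw [add_sub_left_comm, ← mulVec_sub, hM, add_sub_cancel]
      · exact add_sub_cancel _ _

end Affine

def boolEquivZModTwo : Bool ≃ ZMod 2 where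
  toFun := b2f
  invFun z := decide (z = 1)
  left_inv := by decide
  right_inv := by decide

def boolAffineFamily (m n : Type*) [Fintype n] :
    Matrix m n (ZMod 2) × (m → ZMod 2) → (n → Bool) → (m → Bool) :=
  fun A u => (Equiv.piCongrRight fun _ => boolEquivZModTwo).symm
    (affineFamily (ZMod 2) m n A (Equiv.piCongrRight (fun _ => boolEquivZModTwo) u))

theorem isPairwiseIndependentFamily_boolAffineFamily {m n : Type*} [Fintype m] [Fintype n]
    [DecidableEq m] [DecidableEq n] : IsPairwiseIndependentFamily (boolAffineFamily m n) :=
  isPairwiseIndependentFamily_affineFamily.comp_equiv _ _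

section Polynomial

open MvPolynomial

theorem totalDegree_bind₁_le_mul {σ τ R : Type*} [CommSemiring R] {g : σ → MvPolynomial τ R}
    {e : ℕ} (hg : ∀ j, (g j).totalDegree ≤ e) (p : MvPolynomial σ R) :
    (bind₁ g p).totalDegree ≤ e * p.totalDegree := by
  conv_lhs => rw [p.as_sum]
  rw [map_sum]
  refine totalDegree_finsetSum_le fun v hv => ?_
  rw [bind₁_monomial]
  calc (C (p.coeff v) * ∏ i ∈ v.support, g i ^ v i).totalDegree
      ≤ ∑ i ∈ v.support, (g i ^ v i).totalDegree := by
        refine (totalDegree_mul _ _).trans ?_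
        rw [totalDegree_C, zero_add]
        exact totalDegree_finsetProd _ _
    _ ≤ ∑ i ∈ v.support, e * v i := Finset.sum_le_sum fun i _ =>
        (totalDegree_pow _ _).trans (by rw [mul_comm]; exact Nat.mul_le_mul_right _ (hg i))
    _ ≤ e * p.totalDegree := by
        rw [← Finset.mul_sum]
        exact Nat.mul_le_mul_left _ (by simpa [Finsupp.sum] using le_totalDegree hv)

variable {K m n : Type*} [CommSemiring K] [Fintype n]

noncomputable def affineSubst (A : Matrix m n K × (m → K)) (j : m) : MvPolynomial n K :=
  ∑ i, C (A.1 j i) * X i + C (A.2 j)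

lemma totalDegree_affineSubst_le (A : Matrix m n K × (m → K)) (j : m) :
    (affineSubst A j).totalDegree ≤ 1 := by
  refine (totalDegree_add _ _).trans (max_le (totalDegree_finsetSum_le fun i _ => ?_) ?_)
  · rw [C_mul_X_eq_monomial]
    exact (totalDegree_monomial_le _ _).trans (by simp)
  · rw [totalDegree_C]
    exact zero_le_one

lemma eval_affineSubst (A : Matrix m n K × (m → K)) (v : n → K) (j : m) :
    eval v (affineSubst A j) = affineFamily K m n A v j := by
  simp [affineSubst, affineFamily, Matrix.mulVec, dotProduct]

end Polynomial

noncomputable def boolPolyMap {σ ι : Type*} (P : ι → MvPolynomial σ (ZMod 2)) (u : σ → Bool) :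
    ι → Bool :=
  fun i => decide (MvPolynomial.eval (fun j => b2f (u j)) (P i) = 1)

lemma boolPolyMap_comp_boolAffineFamily {m n ι : Type*} [Fintype n]
    (P : ι → MvPolynomial m (ZMod 2)) (A : Matrix m n (ZMod 2) × (m → ZMod 2)) :
    (fun u => boolPolyMap P (boolAffineFamily m n A u)) =
      boolPolyMap fun i => MvPolynomial.bind₁ (affineSubst A) (P i) := by
  funext u i
  have hsubst : (fun j => b2f (boolAffineFamily m n A u j)) =
      fun j => MvPolynomial.eval (fun k => b2f (u k)) (affineSubst A j) := by
    funext j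
    rw [eval_affineSubst]
    exact boolEquivZModTwo.apply_symm_apply _
  simp only [boolPolyMap, hsubst]
  congr 2
  exact (MvPolynomial.eval₂Hom_bind₁ _ _ _ _).symm

theorem push_boolPolyMap_comp_boolAffineFamily_mem_polySourceExact {d r t n : ℕ}
    {P : Fin n → MvPolynomial (Fin r) (ZMod 2)} (hP : ∀ i, (P i).totalDegree ≤ d)
    (A : Matrix (Fin r) (Fin t) (ZMod 2) × (Fin r → ZMod 2)) :
    push (fun u => boolPolyMap P (boolAffineFamily _ _ A u)) (unif (Fin t → Bool)) ∈
      polySourceExact d t n := by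
  refine ⟨fun i => MvPolynomial.bind₁ (affineSubst A) (P i), fun i => ?_, ?_⟩
  · exact (totalDegree_bind₁_le_mul (totalDegree_affineSubst_le A) (P i)).trans
      ((one_mul _).trans_le (hP i))
  · rw [boolPolyMap_comp_boolAffineFamily]
    rfl

lemma inv_two_pow_div_inv_two_pow_sq_le {k t : ℕ} (hkt : 3 * k ≤ t) :
    ((2 : ℝ) ^ t)⁻¹ / ((2 ^ k)⁻¹) ^ 2 ≤ (2 ^ k)⁻¹ := by
  have h3k : ((2 : ℝ) ^ k) ^ 2 * 2 ^ k ≤ 2 ^ t := by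
    rw [← pow_succ, ← pow_mul]
    exact pow_le_pow_right₀ one_le_two (by omega)
  rw [inv_pow, div_inv_eq_mul, inv_mul_le_iff₀ (by positivity), ← div_eq_mul_inv,
    le_div_iff₀ (by positivity)]
  exact h3k

theorem stmt6_general (n d k : ℕ) (a b : ℝ)
    (Iso : (Fin n → Bool) → Bool)
    (h : IsIsolator (polySourceAtMostInputs d (4 * (k + 1)) n) Iso a b ((k : ℝ) - 1)) :
    IsIsolator (polySource d n) Iso a (b + ((2 : ℝ) ^ k)⁻¹) (k : ℝ) := by
  refine ⟨h.1, ?_⟩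
  rintro _ ⟨r, -, P, hP, rfl⟩
  set t := 4 * (k + 1)
  have hrestrict := isPairwiseIndependentFamily_boolAffineFamily (m := Fin r) (n := Fin t)
  have hthreshold : (2 : ℝ) ^ (-((k : ℝ) - 1)) = 2 * ((2 : ℝ) ^ k)⁻¹ := by
    rw [neg_sub, Real.rpow_sub two_pos, Real.rpow_one, Real.rpow_natCast, div_eq_mul_inv]
  have hbound := prob_light_le_of_sum_sq_sub_le isDist_unif (fun _ => isDist_unif.push _)
    (hrestrict.sum_unif_mul_push_comp (boolPolyMap P))
    (hrestrict.sum_unif_mul_sq_push_comp_sub_le (boolPolyMap P))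
    (by positivity : (0 : ℝ) < (2 ^ k)⁻¹) (fun x => Iso x = true) (b := b) fun A => by
      rw [← hthreshold]
      exact h.2 _ ⟨t, by omega, le_rfl,
        push_boolPolyMap_comp_boolAffineFamily_mem_polySourceExact hP A⟩
  rw [Real.rpow_neg zero_le_two, Real.rpow_natCast]
  refine hbound.trans (add_le_add_right ?_ b)
  simpa using inv_two_pow_div_inv_two_pow_sq_le (k := k) (t := t) (by omega)

theorem stmt6 (n d k : ℕ) (hn : 0 < n) (hd : 0 < d) (hk : 0 < k)
    (a b : ℝ) (ha : a ∈ Set.Icc (0 : ℝ) 1) (hb : b ∈ Set.Icc (0 : ℝ) 1)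
    (Iso : (Fin n → Bool) → Bool)
    (h : IsIsolator (polySourceAtMostInputs d (4 * (k + 1)) n) Iso a b ((k : ℝ) - 1)) :
    IsIsolator (polySource d n) Iso a (b + ((2 : ℝ) ^ k)⁻¹) (k : ℝ) :=
  stmt6_general n d k a b Iso h
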